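/- arXiv:2604.02531 — 4 statements merged into one kernel-verified Lean document; each statement's English description precedes it below -/
import Mathlib

section
/- Let H ∈ ℝ^{n×n} with H + Hᵀ positive definite, f ∈ ℝⁿ, A ∈ ℝ^{m×n}, b ∈ ℝᵐ, and let 𝒜 ⊆ {1, …, m} be such that the rows {Aᵢ : i ∈ 𝒜} of A are linearly independent. Then the linear system Hx + A_𝒜ᵀ λ = −f, A_𝒜 x = b_𝒜 in the unknowns (x, λ) ∈ ℝⁿ × ℝ^{𝒜} has at most one solution. -/
open Matrix

/-- Let `H + Hᵀ` be positive definite and let `𝒜 ⊆ {1,…,m}` be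
such that the rows `{Aᵢ : i ∈ 𝒜}` of `A` are linearly independent. Then the
linear system `H x + A_𝒜ᵀ λ = −f`, `A_𝒜 x = b_𝒜` in `(x, λ) ∈ ℝⁿ × ℝ^𝒜`
(here `A_𝒜ᵀ λ = ∑_{i ∈ 𝒜} λᵢ Aᵢ`) has at most one solution. -/
theorem kkt_system_unique (n m : ℕ) (H : Matrix (Fin n) (Fin n) ℝ)
    (f : Fin n → ℝ) (A : Matrix (Fin m) (Fin n) ℝ) (b : Fin m → ℝ)
    (hpd : ∀ v : Fin n → ℝ, v ≠ 0 → 0 < v ⬝ᵥ ((H + Hᵀ) *ᵥ v))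
    (𝒜 : Finset (Fin m))
    (hlicq : LinearIndependent ℝ (fun i : {i : Fin m // i ∈ 𝒜} => A i.1))
    (x₁ x₂ : Fin n → ℝ) (l₁ l₂ : {i : Fin m // i ∈ 𝒜} → ℝ)
    (h₁stat : H *ᵥ x₁ + ∑ i : {i : Fin m // i ∈ 𝒜}, l₁ i • A i.1 = -f)
    (h₁act : ∀ i : {i : Fin m // i ∈ 𝒜}, A i.1 ⬝ᵥ x₁ = b i.1)
    (h₂stat : H *ᵥ x₂ + ∑ i : {i : Fin m // i ∈ 𝒜}, l₂ i • A i.1 = -f)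
    (h₂act : ∀ i : {i : Fin m // i ∈ 𝒜}, A i.1 ⬝ᵥ x₂ = b i.1) :
    x₁ = x₂ ∧ l₁ = l₂ := by
  set d : Fin n → ℝ := x₁ - x₂ with hd
  -- subtracted stationarity equation
  have hstat : H *ᵥ d + ∑ i : {i : Fin m // i ∈ 𝒜}, (l₁ i - l₂ i) • A i.1 = 0 := by
    have := congrArg₂ (· - ·) h₁stat h₂stat
    simp only [sub_self] at this
    rw [← this]
    simp [hd, mulVec_sub, sub_smul, Finset.sum_sub_distrib]
    abel
  -- d is in the kernel of each active row
  have hker : ∀ i : {i : Fin m // i ∈ 𝒜}, A i.1 ⬝ᵥ d = 0 := by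
    intro i
    simp [hd, dotProduct_sub, h₁act i, h₂act i]
  -- d ⬝ H d = 0
  have hdHd : d ⬝ᵥ (H *ᵥ d) = 0 := by
    have h1 : d ⬝ᵥ (H *ᵥ d + ∑ i : {i : Fin m // i ∈ 𝒜}, (l₁ i - l₂ i) • A i.1) = 0 := by
      rw [hstat]; simp
    rw [dotProduct_add] at h1
    have h2 : d ⬝ᵥ (∑ i : {i : Fin m // i ∈ 𝒜}, (l₁ i - l₂ i) • A i.1) = 0 := by
      simp only [dotProduct, Finset.sum_apply, Pi.smul_apply, smul_eq_mul,
        Finset.mul_sum]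
      rw [Finset.sum_comm]
      apply Finset.sum_eq_zero
      intro i _
      have h3 := hker i
      simp only [dotProduct] at h3
      calc ∑ j, d j * ((l₁ i - l₂ i) * A i.1 j)
          = (l₁ i - l₂ i) * ∑ j, A i.1 j * d j := by
            rw [Finset.mul_sum]; congr 1; funext j; ring
        _ = 0 := by rw [h3, mul_zero]
    rw [h2, add_zero] at h1
    exact h1
  -- hence d = 0
  have hd0 : d = 0 := by
    by_contra hne
    have := hpd d hne
    rw [add_mulVec, dotProduct_add, hdHd, zero_add,
      dotProduct_mulVec, vecMul_transpose, dotProduct_comm, hdHd] at this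
    exact lt_irrefl 0 this
  have hx : x₁ = x₂ := sub_eq_zero.mp hd0
  refine ⟨hx, ?_⟩
  -- multipliers: linear independence
  have hsum : ∑ i : {i : Fin m // i ∈ 𝒜}, (l₁ i - l₂ i) • A i.1 = 0 := by
    rw [hd0, mulVec_zero, zero_add] at hstat
    exact hstat
  have := linearIndependent_iff'.mp hlicq Finset.univ (fun i => l₁ i - l₂ i) hsum
  funext i
  have h4 := this i (Finset.mem_univ i)
  linarith
end

section
/- Let H ∈ ℝ^{n×n} with H + Hᵀ positive definite, f ∈ ℝⁿ, A ∈ ℝ^{m×n}, b ∈ ℝᵐ, and let (x*, λ*) satisfy the KKT conditions of the AVI with active set 𝒜 = {i : Aᵢx* = bᵢ}. Assume the rows {Aᵢ : i ∈ 𝒜} are linearly independent (LICQ) and λ*ᵢ > 0 for every i ∈ 𝒜 (strict complementarity). Let ρ > 0, H̃ := ρI + ½(H + Hᵀ), f̃(z) := f + (H − H̃)z. Then the QP subproblem with parameter z = x* also satisfies LICQ and strict complementarity at its solution: its unique minimizer is x*, the set of constraints active at this minimizer equals 𝒜 and has linearly independent gradients, any KKT multiplier λ of this QP equals λ*, and λ*ᵢ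 > 0 for all i ∈ 𝒜. -/
open Matrix

/-- `H̃ = ρ I + ½ (H + Hᵀ)`. -/
noncomputable def Htil {n : ℕ} (H : Matrix (Fin n) (Fin n) ℝ) (ρ : ℝ) :
    Matrix (Fin n) (Fin n) ℝ :=
  ρ • (1 : Matrix (Fin n) (Fin n) ℝ) + (2⁻¹ : ℝ) • (H + Hᵀ)

/-- `f̃(z) = f + (H − H̃) z`. -/
noncomputable def ftil {n : ℕ} (H : Matrix (Fin n) (Fin n) ℝ) (f : Fin n → ℝ)
    (ρ : ℝ) (z : Fin n → ℝ) : Fin n → ℝ :=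
  f + (H - Htil H ρ) *ᵥ z

/-- The Douglas–Rachford QP objective `½ xᵀ H̃ x + f̃(z)ᵀ x`. -/
noncomputable def qpObj {n : ℕ} (H : Matrix (Fin n) (Fin n) ℝ) (f : Fin n → ℝ)
    (ρ : ℝ) (z x : Fin n → ℝ) : ℝ :=
  2⁻¹ * (x ⬝ᵥ (Htil H ρ *ᵥ x)) + ftil H f ρ z ⬝ᵥ x

/-!
Since `H̃ x + f̃(x) = H x + f`, a KKT pair `(x*, λ*)` of the AVI is also a KKT pair of the QP
subproblem with `z = x*`. As `H̃` is positive definite, a KKT point of the QP is its unique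
minimizer, so every KKT pair of the QP has primal part `x*`. The multipliers of inactive
constraints vanish by complementarity, and LICQ at `x*` then determines the active ones.
-/

/-- The KKT system of `AVI(M, c, A, b)`; for symmetric `M` it is also the KKT system of the QP
`min ½ xᵀ M x + cᵀ x` subject to `A x ≤ b`. -/
structure IsAffineKKT {ι κ : Type*} [Fintype ι] [Fintype κ] (M : Matrix ι ι ℝ) (c : ι → ℝ)
    (A : Matrix κ ι ℝ) (b : κ → ℝ) (x : ι → ℝ) (l : κ → ℝ) : Prop where
  stationary : M *ᵥ x + c + Aᵀ *ᵥ l = 0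
  nonneg : 0 ≤ l
  feasible : A *ᵥ x ≤ b
  complementary : ∀ i, l i * (b i - A i ⬝ᵥ x) = 0

namespace IsAffineKKT

variable {ι κ : Type*} [Fintype ι] [Fintype κ] {M : Matrix ι ι ℝ} {c : ι → ℝ}
  {A : Matrix κ ι ℝ} {b : κ → ℝ} {x u : ι → ℝ} {l l' : κ → ℝ}

theorem eq_zero_of_inactive (h : IsAffineKKT M c A b x l) {i : κ} (hi : A i ⬝ᵥ x ≠ b i) :
    l i = 0 :=
  (mul_eq_zero.mp (h.complementary i)).resolve_right (sub_ne_zero.mpr hi.symm)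

theorem mulVec_add_eq_neg_vecMul (h : IsAffineKKT M c A b x l) : M *ᵥ x + c = -(l ᵥ* A) := by
  rw [← mulVec_transpose]
  exact eq_neg_of_add_eq_zero_left h.stationary

theorem dotProduct_mulVec_sub_nonpos (h : IsAffineKKT M c A b x l) (hu : A *ᵥ u ≤ b) :
    l ⬝ᵥ (A *ᵥ (u - x)) ≤ 0 := by
  refine Finset.sum_nonpos fun i _ => ?_
  rw [mulVec_sub, Pi.sub_apply]
  change l i * ((A *ᵥ u) i - A i ⬝ᵥ x) ≤ 0
  have hl : 0 ≤ l i := h.nonneg i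
  have hui : (A *ᵥ u) i ≤ b i := hu i
  nlinarith [h.complementary i]

theorem dotProduct_sub_nonneg (h : IsAffineKKT M c A b x l) (hu : A *ᵥ u ≤ b) :
    0 ≤ (M *ᵥ x + c) ⬝ᵥ (u - x) := by
  rw [h.mulVec_add_eq_neg_vecMul, neg_dotProduct, ← dotProduct_mulVec]
  linarith [h.dotProduct_mulVec_sub_nonpos hu]

theorem multiplier_eq_of_linearIndependent (h : IsAffineKKT M c A b x l)
    (h' : IsAffineKKT M c A b x l')
    (hlicq : LinearIndependent ℝ (fun i : {i : κ // A i ⬝ᵥ x = b i} => A i.1)) : l = l' := by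
  classical
  have hinactive : ∀ i, A i ⬝ᵥ x ≠ b i → (l - l') i = 0 := fun i hi => by
    simp [h.eq_zero_of_inactive hi, h'.eq_zero_of_inactive hi]
  have hcomb : ∑ i, (l - l') i • A i = 0 := by
    have hvecMul : l ᵥ* A = l' ᵥ* A :=
      neg_injective (h.mulVec_add_eq_neg_vecMul.symm.trans h'.mulVec_add_eq_neg_vecMul)
    rw [← vecMul_eq_sum, sub_vecMul, hvecMul, sub_self]
  have hactive : ∑ i : {i : κ // A i ⬝ᵥ x = b i}, (l - l') i • A i = 0 := by
    rw [← hcomb, ← Fintype.sum_subtype_add_sum_subtype (fun i => A i ⬝ᵥ x = b i),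
      Fintype.sum_eq_zero (fun i : {i // ¬ A i ⬝ᵥ x = b i} => (l - l') i • A i)
        (fun i => by rw [hinactive i i.2, zero_smul]), add_zero]
  ext i
  by_cases hi : A i ⬝ᵥ x = b i
  · exact sub_eq_zero.mp (Fintype.linearIndependent_iff.mp hlicq _ hactive ⟨i, hi⟩)
  · exact sub_eq_zero.mp (hinactive i hi)

end IsAffineKKT

section QuadraticProgram

variable {ι κ : Type*} [Fintype ι] [Fintype κ] {Q : Matrix ι ι ℝ} {c : ι → ℝ}
  {A : Matrix κ ι ℝ} {b : κ → ℝ} {x u : ι → ℝ} {l : κ → ℝ}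

noncomputable def quadObj (Q : Matrix ι ι ℝ) (c x : ι → ℝ) : ℝ :=
  2⁻¹ * (x ⬝ᵥ (Q *ᵥ x)) + c ⬝ᵥ x

theorem quadObj_eq_add (hQ : Q.IsHermitian) (x₀ x : ι → ℝ) :
    quadObj Q c x = quadObj Q c x₀ + 2⁻¹ * ((x - x₀) ⬝ᵥ (Q *ᵥ (x - x₀)))
      + (Q *ᵥ x₀ + c) ⬝ᵥ (x - x₀) := by
  have hsymm : x₀ ⬝ᵥ (Q *ᵥ x) = (Q *ᵥ x₀) ⬝ᵥ x := by
    rw [dotProduct_mulVec, ← mulVec_transpose, ← conjTranspose_eq_transpose_of_trivial, hQ.eq]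
  simp only [quadObj, mulVec_sub, dotProduct_sub, sub_dotProduct, add_dotProduct, hsymm]
  rw [dotProduct_comm (Q *ᵥ x₀) x₀, dotProduct_comm (Q *ᵥ x₀) x]
  ring

theorem IsAffineKKT.quadObj_le (hQ : Q.PosSemidef) (h : IsAffineKKT Q c A b x l)
    (hu : A *ᵥ u ≤ b) : quadObj Q c x ≤ quadObj Q c u := by
  rw [quadObj_eq_add hQ.isHermitian x u]
  have hcurv : 0 ≤ (u - x) ⬝ᵥ (Q *ᵥ (u - x)) := by
    simpa using hQ.dotProduct_mulVec_nonneg (u - x)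
  linarith [h.dotProduct_sub_nonneg hu]

theorem IsAffineKKT.eq_of_quadObj_le (hQ : Q.PosDef) (h : IsAffineKKT Q c A b x l)
    (hu : A *ᵥ u ≤ b) (hle : quadObj Q c u ≤ quadObj Q c x) : u = x := by
  by_contra hne
  rw [quadObj_eq_add hQ.isHermitian x u] at hle
  have hcurv : 0 < (u - x) ⬝ᵥ (Q *ᵥ (u - x)) := by
    simpa using hQ.dotProduct_mulVec_pos (sub_ne_zero.mpr hne)
  linarith [h.dotProduct_sub_nonneg hu]

end QuadraticProgram

theorem Htil_mulVec_add_ftil {n : ℕ} (H : Matrix (Fin n) (Fin n) ℝ) (f : Fin n → ℝ) (ρ : ℝ)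
    (z : Fin n → ℝ) : Htil H ρ *ᵥ z + ftil H f ρ z = H *ᵥ z + f := by
  rw [ftil, sub_mulVec]
  abel

theorem IsAffineKKT.toSubproblem {n m : ℕ} {H : Matrix (Fin n) (Fin n) ℝ} {f : Fin n → ℝ}
    {A : Matrix (Fin m) (Fin n) ℝ} {b : Fin m → ℝ} {x : Fin n → ℝ} {l : Fin m → ℝ}
    (h : IsAffineKKT H f A b x l) (ρ : ℝ) : IsAffineKKT (Htil H ρ) (ftil H f ρ x) A b x l :=
  { h with stationary := by rw [Htil_mulVec_add_ftil, h.stationary] }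

theorem posDef_Htil {n : ℕ} {H : Matrix (Fin n) (Fin n) ℝ}
    (hpd : ∀ v : Fin n → ℝ, v ≠ 0 → 0 < v ⬝ᵥ ((H + Hᵀ) *ᵥ v)) {ρ : ℝ} (hρ : 0 ≤ ρ) :
    (Htil H ρ).PosDef := by
  have hsum : (H + Hᵀ).PosDef := by
    refine posDef_iff_dotProduct_mulVec.mpr ⟨?_, fun v hv => by simpa using hpd v hv⟩
    simpa [conjTranspose_eq_transpose_of_trivial] using isHermitian_add_transpose_self H
  exact PosDef.posSemidef_add (PosSemidef.one.smul hρ) (hsum.smul (by norm_num))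

/-- transfer of regularity: Let `(x*, λ*)` satisfy the KKT
conditions of the AVI with active set `𝒜 = {i : Aᵢ x* = bᵢ}`, and assume LICQ
and strict complementarity. Then for the Douglas–Rachford QP subproblem with
parameter `z = x*`: its unique minimizer is `x*`; the set of constraints active
at any minimizer equals `𝒜` and has linearly independent gradients; any KKT
multiplier `λ` of this QP equals `λ*`; and `λ*ᵢ > 0` for all `i ∈ 𝒜`. -/
theorem transfer_of_regularity (n m : ℕ) (H : Matrix (Fin n) (Fin n) ℝ)
    (f : Fin n → ℝ) (A : Matrix (Fin m) (Fin n) ℝ) (b : Fin m → ℝ)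
    (hpd : ∀ v : Fin n → ℝ, v ≠ 0 → 0 < v ⬝ᵥ ((H + Hᵀ) *ᵥ v))
    (xs : Fin n → ℝ) (ls : Fin m → ℝ)
    (hstat : H *ᵥ xs + f + Aᵀ *ᵥ ls = 0)
    (hlpos : 0 ≤ ls)
    (hfeas : A *ᵥ xs ≤ b)
    (hcomp : ∀ i : Fin m, ls i * (b i - A i ⬝ᵥ xs) = 0)
    (hlicq : LinearIndependent ℝ
      (fun i : {i : Fin m // A i ⬝ᵥ xs = b i} => A i.1))
    (hstrict : ∀ i : Fin m, A i ⬝ᵥ xs = b i → 0 < ls i)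
    (ρ : ℝ) (hρ : 0 < ρ) :
    -- `x*` is a minimizer of the QP subproblem with parameter `z = x*` …
    (A *ᵥ xs ≤ b ∧ ∀ x : Fin n → ℝ, A *ᵥ x ≤ b →
        qpObj H f ρ xs xs ≤ qpObj H f ρ xs x) ∧
    -- … and it is the unique one;
    (∀ y : Fin n → ℝ,
      (A *ᵥ y ≤ b ∧ ∀ x : Fin n → ℝ, A *ᵥ x ≤ b →
          qpObj H f ρ xs y ≤ qpObj H f ρ xs x) →
      y = xs ∧
      -- the active set at the minimizer equals `𝒜` …
      {i : Fin m | A i ⬝ᵥ y = b i} = {i : Fin m | A i ⬝ᵥ xs = b i} ∧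
      -- … and its gradients are linearly independent (LICQ for the QP);
      LinearIndependent ℝ
        (fun i : {i : Fin m // A i ⬝ᵥ y = b i} => A i.1)) ∧
    -- any KKT multiplier of the QP subproblem equals `λ*` …
    (∀ (x : Fin n → ℝ) (l : Fin m → ℝ),
      (Htil H ρ *ᵥ x + ftil H f ρ xs + Aᵀ *ᵥ l = 0 ∧ 0 ≤ l ∧
        A *ᵥ x ≤ b ∧ ∀ i : Fin m, l i * (b i - A i ⬝ᵥ x) = 0) →
      l = ls) ∧
    -- … and strict complementarity holds: `λ*ᵢ > 0` on `𝒜`.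
    (∀ i : Fin m, A i ⬝ᵥ xs = b i → 0 < ls i) := by
  have hQ : (Htil H ρ).PosDef := posDef_Htil hpd hρ.le
  have hkkt : IsAffineKKT (Htil H ρ) (ftil H f ρ xs) A b xs ls :=
    IsAffineKKT.toSubproblem ⟨hstat, hlpos, hfeas, hcomp⟩ ρ
  have hmin : ∀ x, A *ᵥ x ≤ b → qpObj H f ρ xs xs ≤ qpObj H f ρ xs x :=
    fun x hx => hkkt.quadObj_le hQ.posSemidef hx
  refine ⟨⟨hfeas, hmin⟩, ?_, ?_, hstrict⟩
  · rintro y ⟨hy, hymin⟩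
    obtain rfl : y = xs := hkkt.eq_of_quadObj_le hQ hy (hymin xs hfeas)
    exact ⟨rfl, rfl, hlicq⟩
  · rintro x l ⟨hstat', hl, hx, hcomp'⟩
    have hkkt' : IsAffineKKT (Htil H ρ) (ftil H f ρ xs) A b x l := ⟨hstat', hl, hx, hcomp'⟩
    obtain rfl : x = xs := hkkt.eq_of_quadObj_le hQ hx (hkkt'.quadObj_le hQ.posSemidef hfeas)
    exact hkkt'.multiplier_eq_of_linearIndependent hkkt hlicq
end

section
/- Let H ∈ ℝ^{n×n} with H + Hᵀ positive definite, f ∈ ℝⁿ, A ∈ ℝ^{m×n}, b ∈ ℝᵐ, and let (x*, λ*) satisfy the KKT conditions of the AVI with active set 𝒜 = {i : Aᵢx* = bᵢ}. Assume the rows {Aᵢ : i ∈ 𝒜} are linearly independent and λ*ᵢ > 0 for every i ∈ 𝒜. Let ρ > 0, H̃ := ρI + ½(H + Hᵀ), f̃(z) := f + (H − H̃)z, and for each z ∈ ℝⁿ let y(z) denote the unique minimizer of ½xᵀH̃x + f̃(z)ᵀx over 𝒳 = {x : Ax ≤ b}. Then there exists ε > 0 such that for every z with ‖z − x*‖ <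 ε, the active set of y(z) equals 𝒜, i.e., Aᵢ y(z) = bᵢ if and only if i ∈ 𝒜. -/
open Matrix

lemma Htil_symm {n : ℕ} (H : Matrix (Fin n) (Fin n) ℝ) (ρ : ℝ) :
    (Htil H ρ)ᵀ = Htil H ρ := by
  simp [Htil, Matrix.transpose_add, Matrix.transpose_smul, add_comm H Hᵀ]
  abel

lemma dot_symm {n : ℕ} (M : Matrix (Fin n) (Fin n) ℝ) (hM : Mᵀ = M)
    (x y : Fin n → ℝ) : x ⬝ᵥ (M *ᵥ y) = y ⬝ᵥ (M *ᵥ x) := by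
  rw [dotProduct_mulVec, ← Matrix.mulVec_transpose, hM, dotProduct_comm]

lemma Htil_pd {n : ℕ} {H : Matrix (Fin n) (Fin n) ℝ}
    (hpd : ∀ v : Fin n → ℝ, v ≠ 0 → 0 < v ⬝ᵥ ((H + Hᵀ) *ᵥ v))
    {ρ : ℝ} (hρ : 0 < ρ) (v : Fin n → ℝ) (hv : v ≠ 0) :
    0 < v ⬝ᵥ (Htil H ρ *ᵥ v) := by
  have h1 : v ⬝ᵥ (Htil H ρ *ᵥ v)
      = ρ * (v ⬝ᵥ v) + 2⁻¹ * (v ⬝ᵥ ((H + Hᵀ) *ᵥ v)) := by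
    simp [Htil, Matrix.add_mulVec, Matrix.smul_mulVec, dotProduct_add,
      dotProduct_smul, smul_eq_mul]
    ring
  rw [h1]
  have h2 : 0 < v ⬝ᵥ v := by
    have hnn : 0 ≤ v ⬝ᵥ v := Finset.sum_nonneg fun i _ => mul_self_nonneg (v i)
    exact lt_of_le_of_ne hnn
      (fun h => hv ((dotProduct_self_eq_zero (v := v)).mp h.symm))
  nlinarith [hpd v hv]

lemma Htil_psd {n : ℕ} {H : Matrix (Fin n) (Fin n) ℝ}
    (hpd : ∀ v : Fin n → ℝ, v ≠ 0 → 0 < v ⬝ᵥ ((H + Hᵀ) *ᵥ v))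
    {ρ : ℝ} (hρ : 0 < ρ) (v : Fin n → ℝ) :
    0 ≤ v ⬝ᵥ (Htil H ρ *ᵥ v) := by
  by_cases hv : v = 0
  · simp [hv]
  · exact (Htil_pd hpd hρ v hv).le

lemma qp_expand {n : ℕ} (H : Matrix (Fin n) (Fin n) ℝ) (f : Fin n → ℝ)
    (ρ : ℝ) (z w x : Fin n → ℝ) :
    qpObj H f ρ z x = qpObj H f ρ z w
      + (Htil H ρ *ᵥ w + ftil H f ρ z) ⬝ᵥ (x - w)
      + 2⁻¹ * ((x - w) ⬝ᵥ (Htil H ρ *ᵥ (x - w))) := by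
  have hs : x ⬝ᵥ (Htil H ρ *ᵥ w) = w ⬝ᵥ (Htil H ρ *ᵥ x) :=
    dot_symm _ (Htil_symm H ρ) x w
  simp only [qpObj, Matrix.mulVec_sub, dotProduct_sub, sub_dotProduct,
    add_dotProduct, dotProduct_add]
  ring_nf
  rw [dotProduct_comm (Htil H ρ *ᵥ w) x, dotProduct_comm (Htil H ρ *ᵥ w) w] at *
  linarith [hs]

/-- active-set identification: Let `(x*, λ*)` satisfy the KKT
conditions of the AVI with active set `𝒜 = {i : Aᵢ x* = bᵢ}`, assume LICQ and
strict complementarity, and let `ρ > 0`. Then there is `ε > 0` such that for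
every `z` with Euclidean distance `‖z − x*‖ < ε` (expressed via
`(z − x*) ⬝ᵥ (z − x*) < ε²`), any minimizer `y(z)` of the Douglas–Rachford QP
subproblem with parameter `z` has active set exactly `𝒜`:
`Aᵢ y(z) = bᵢ ↔ i ∈ 𝒜`. -/
theorem active_set_identification (n m : ℕ) (H : Matrix (Fin n) (Fin n) ℝ)
    (f : Fin n → ℝ) (A : Matrix (Fin m) (Fin n) ℝ) (b : Fin m → ℝ)
    (hpd : ∀ v : Fin n → ℝ, v ≠ 0 → 0 < v ⬝ᵥ ((H + Hᵀ) *ᵥ v))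
    (xs : Fin n → ℝ) (ls : Fin m → ℝ)
    (hstat : H *ᵥ xs + f + Aᵀ *ᵥ ls = 0)
    (hlpos : 0 ≤ ls)
    (hfeas : A *ᵥ xs ≤ b)
    (hcomp : ∀ i : Fin m, ls i * (b i - A i ⬝ᵥ xs) = 0)
    (hlicq : LinearIndependent ℝ
      (fun i : {i : Fin m // A i ⬝ᵥ xs = b i} => A i.1))
    (hstrict : ∀ i : Fin m, A i ⬝ᵥ xs = b i → 0 < ls i)
    (ρ : ℝ) (hρ : 0 < ρ) :
    ∃ ε : ℝ, 0 < ε ∧ ∀ z : Fin n → ℝ, (z - xs) ⬝ᵥ (z - xs) < ε ^ 2 →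
      ∀ y : Fin n → ℝ,
        (A *ᵥ y ≤ b ∧ ∀ x : Fin n → ℝ, A *ᵥ x ≤ b →
            qpObj H f ρ z y ≤ qpObj H f ρ z x) →
        ∀ i : Fin m, A i ⬝ᵥ y = b i ↔ A i ⬝ᵥ xs = b i := by
  classical
  set S := {i : Fin m // A i ⬝ᵥ xs = b i} with hS
  set AS : Matrix S (Fin n) ℝ := fun i => A i.1 with hAS
  set Ht := Htil H ρ with hHt
  set L : ((Fin n → ℝ) × (S → ℝ)) →ₗ[ℝ] ((Fin n → ℝ) × (S → ℝ)) :=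
    { toFun := fun p => (Ht *ᵥ p.1 + ASᵀ *ᵥ p.2, AS *ᵥ p.1),
      map_add' := by
        intro p q
        refine Prod.ext ?_ ?_
        · show Ht *ᵥ (p.1 + q.1) + ASᵀ *ᵥ (p.2 + q.2)
            = (Ht *ᵥ p.1 + ASᵀ *ᵥ p.2) + (Ht *ᵥ q.1 + ASᵀ *ᵥ q.2)
          simp only [Matrix.mulVec_add]; abel
        · show AS *ᵥ (p.1 + q.1) = AS *ᵥ p.1 + AS *ᵥ q.1
          simp [Matrix.mulVec_add]
      map_smul' := by
        intro c p
        simp [Matrix.mulVec_smul, Prod.ext_iff, smul_add] } with hL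
  have hLapp : ∀ p : (Fin n → ℝ) × (S → ℝ),
      L p = (Ht *ᵥ p.1 + ASᵀ *ᵥ p.2, AS *ᵥ p.1) := fun p => rfl
  have hLinj : Function.Injective L := by
    rw [← LinearMap.ker_eq_bot, LinearMap.ker_eq_bot']
    rintro ⟨x, lam⟩ hp
    have h1 : Ht *ᵥ x + ASᵀ *ᵥ lam = 0 := congrArg Prod.fst hp
    have h2 : AS *ᵥ x = 0 := congrArg Prod.snd hp
    have hx : x = 0 := by
      by_contra hx
      have hpos := Htil_pd hpd hρ x hx
      have hq : x ⬝ᵥ (Ht *ᵥ x) + x ⬝ᵥ (ASᵀ *ᵥ lam) = 0 := by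
        rw [← dotProduct_add, h1, dotProduct_zero]
      have hz : x ⬝ᵥ (ASᵀ *ᵥ lam) = 0 := by
        rw [dotProduct_mulVec, ← Matrix.mulVec_transpose, Matrix.transpose_transpose,
          h2, zero_dotProduct]
      rw [hz, add_zero] at hq
      exact absurd hq hpos.ne'
    have hAl : ASᵀ *ᵥ lam = 0 := by
      rw [hx] at h1; simpa using h1
    have hsum : ∑ i : S, lam i • AS i = (0 : Fin n → ℝ) := by
      funext j
      have h := congrFun hAl j
      simp only [Matrix.mulVec, Matrix.transpose_apply, dotProduct] at h
      simpa [Finset.sum_apply, mul_comm] using h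
    have hlam : lam = 0 := funext (Fintype.linearIndependent_iff.mp hlicq lam hsum)
    rw [hx, hlam]; rfl
  have hLsurj : Function.Surjective L := LinearMap.injective_iff_surjective.mp hLinj
  set e := LinearEquiv.ofBijective L ⟨hLinj, hLsurj⟩ with he
  set bS : S → ℝ := fun i => b i.1 with hbS
  set w : (Fin n → ℝ) → ((Fin n → ℝ) × (S → ℝ)) :=
    fun z => e.symm (-(ftil H f ρ z), bS) with hw
  have hLw : ∀ z, L (w z) = (-(ftil H f ρ z), bS) := fun z =>
    e.apply_symm_apply _
  -- value at xs
  have hls0 : ∀ i : Fin m, ¬ (A i ⬝ᵥ xs = b i) → ls i = 0 := by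
    intro i hi
    have := hcomp i
    have hne : b i - A i ⬝ᵥ xs ≠ 0 := sub_ne_zero_of_ne (Ne.symm hi)
    exact (mul_eq_zero.mp this).resolve_right hne
  have hAtls : ASᵀ *ᵥ (fun i : S => ls i.1) = Aᵀ *ᵥ ls := by
    funext j
    show ∑ i : S, A (i : Fin m) j * ls (i : Fin m) = ∑ i : Fin m, A i j * ls i
    have key : ∑ i ∈ Finset.univ.filter (fun i : Fin m => A i ⬝ᵥ xs = b i),
        A i j * ls i = ∑ i : S, A (i : Fin m) j * ls (i : Fin m) :=
      Finset.sum_subtype _ (by simp) (fun i => A i j * ls i)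
    rw [← key, Finset.sum_filter]
    apply Finset.sum_congr rfl
    intro i _
    by_cases hi : A i ⬝ᵥ xs = b i
    · simp [hi]
    · simp [hi, hls0 i hi]
  have hwxs : w xs = (xs, fun i : S => ls i.1) := by
    rw [hw]
    rw [LinearEquiv.symm_apply_eq]
    symm
    show L _ = _
    rw [hLapp]
    refine Prod.ext ?_ ?_
    · show Ht *ᵥ xs + ASᵀ *ᵥ (fun i : S => ls i.1) = -(ftil H f ρ xs)
      rw [hAtls, ftil]
      have hsub : (H - Ht) *ᵥ xs = H *ᵥ xs - Ht *ᵥ xs := Matrix.sub_mulVec H Ht xs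
      rw [hsub]
      have := hstat
      funext j
      have hj := congrFun hstat j
      simp only [Pi.add_apply, Pi.zero_apply] at hj
      simp only [Pi.add_apply, Pi.neg_apply, Pi.sub_apply]
      linarith
    · show AS *ᵥ xs = bS
      funext i
      show AS i ⬝ᵥ xs = b i.1
      exact i.2
  -- continuity of w
  have hmv : Continuous fun z : Fin n → ℝ => (H - Ht) *ᵥ z := by
    have hco := LinearMap.continuous_of_finiteDimensional ((H - Ht).mulVecLin)
    have hfe : (fun z : Fin n → ℝ => (H - Ht) *ᵥ z) = ⇑((H - Ht).mulVecLin) := by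
      funext z; simp [Matrix.mulVecLin_apply, Matrix.sub_mulVec]
    rw [hfe]; exact hco
  have hcont1 : Continuous fun z : Fin n → ℝ => -(ftil H f ρ z) := by
    have : (fun z : Fin n → ℝ => -(ftil H f ρ z))
        = fun z => -(f + (H - Ht) *ᵥ z) := by
      funext z; rw [ftil, hHt]
    rw [this]
    exact (continuous_const.add hmv).neg
  have hcontw : Continuous w := by
    have hesymm : Continuous ⇑e.symm :=
      LinearMap.continuous_of_finiteDimensional e.symm.toLinearMap
    exact hesymm.comp (hcont1.prodMk continuous_const)
  -- the good neighborhood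
  have hev : ∀ᶠ z in nhds xs, (∀ i : S, 0 < (w z).2 i) ∧
      (∀ i : Fin m, ¬(A i ⬝ᵥ xs = b i) → A i ⬝ᵥ (w z).1 < b i) := by
    refine Filter.Eventually.and ?_ ?_
    · rw [Filter.eventually_all]
      intro i
      have hg : Continuous fun z => (w z).2 i :=
        (continuous_apply i).comp (continuous_snd.comp hcontw)
      have hopen : IsOpen {z | 0 < (w z).2 i} := isOpen_lt continuous_const hg
      have hmem : xs ∈ {z | 0 < (w z).2 i} := by
        show 0 < (w xs).2 i
        rw [hwxs]
        exact hstrict i.1 i.2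
      exact hopen.mem_nhds hmem
    · rw [Filter.eventually_all]
      intro i
      by_cases hi : A i ⬝ᵥ xs = b i
      · exact Filter.Eventually.of_forall fun z h => absurd hi h
      · have hdc : Continuous fun v : Fin n → ℝ => A i ⬝ᵥ v := by
          show Continuous fun v : Fin n → ℝ => ∑ j, A i j * v j
          exact continuous_finset_sum _ fun j _ =>
            continuous_const.mul (continuous_apply j)
        have hg : Continuous fun z => A i ⬝ᵥ (w z).1 :=
          hdc.comp (continuous_fst.comp hcontw)
        have hopen : IsOpen {z | A i ⬝ᵥ (w z).1 < b i} :=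
          isOpen_lt hg continuous_const
        have hmem : xs ∈ {z | A i ⬝ᵥ (w z).1 < b i} := by
          show A i ⬝ᵥ (w xs).1 < b i
          rw [hwxs]
          exact lt_of_le_of_ne (hfeas i) hi
        filter_upwards [hopen.mem_nhds hmem] with z hz _
        exact hz
  obtain ⟨δ, hδ, hball⟩ := Metric.eventually_nhds_iff.mp hev
  refine ⟨δ, hδ, ?_⟩
  intro z hz
  have hdist : dist z xs < δ := by
    rw [dist_eq_norm]
    rw [pi_norm_lt_iff hδ]
    intro j
    have h1 : ((z - xs) j) * ((z - xs) j) ≤ (z - xs) ⬝ᵥ (z - xs) := by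
      exact Finset.single_le_sum (f := fun i => (z - xs) i * (z - xs) i)
        (fun i _ => mul_self_nonneg _) (Finset.mem_univ j)
    have habs : |(z - xs) j| < δ := by
      nlinarith [abs_nonneg ((z - xs) j), sq_abs ((z - xs) j), hz, h1]
    simpa [Real.norm_eq_abs] using habs
  obtain ⟨hposl, hinact⟩ := hball hdist
  set xh := (w z).1 with hxh
  set lam := (w z).2 with hlam
  have h1 : Ht *ᵥ xh + ASᵀ *ᵥ lam = -(ftil H f ρ z) := congrArg Prod.fst (hLw z)
  have h2 : AS *ᵥ xh = bS := congrArg Prod.snd (hLw z)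
  have hact : ∀ i : S, A i.1 ⬝ᵥ xh = b i.1 := fun i => congrFun h2 i
  have hfeasxh : A *ᵥ xh ≤ b := by
    intro i
    by_cases hi : A i ⬝ᵥ xs = b i
    · exact le_of_eq (hact ⟨i, hi⟩)
    · exact (hinact i hi).le
  have hgrad : Ht *ᵥ xh + ftil H f ρ z = -(ASᵀ *ᵥ lam) := by
    funext j
    have hj := congrFun h1 j
    simp only [Pi.add_apply, Pi.neg_apply] at hj ⊢
    linarith
  have hgradterm : ∀ x : Fin n → ℝ, A *ᵥ x ≤ b →
      0 ≤ (Ht *ᵥ xh + ftil H f ρ z) ⬝ᵥ (x - xh) := by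
    intro x hx
    rw [hgrad, neg_dotProduct]
    have heq : (ASᵀ *ᵥ lam) ⬝ᵥ (x - xh) = lam ⬝ᵥ (AS *ᵥ (x - xh)) := by
      rw [Matrix.mulVec_transpose, ← dotProduct_mulVec]
    rw [heq]
    have hle : lam ⬝ᵥ (AS *ᵥ (x - xh)) ≤ 0 := by
      apply Finset.sum_nonpos
      intro i _
      have hASi : (AS *ᵥ (x - xh)) i = A i.1 ⬝ᵥ x - A i.1 ⬝ᵥ xh := by
        show AS i ⬝ᵥ (x - xh) = _
        rw [hAS]
        exact dotProduct_sub _ _ _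
      have : (AS *ᵥ (x - xh)) i ≤ 0 := by
        rw [hASi, hact i]
        have hxi : A i.1 ⬝ᵥ x ≤ b i.1 := hx i.1
        linarith
      exact mul_nonpos_of_nonneg_of_nonpos (hposl i).le this
    linarith
  have hmin : ∀ x : Fin n → ℝ, A *ᵥ x ≤ b →
      qpObj H f ρ z xh ≤ qpObj H f ρ z x := by
    intro x hx
    have hexp := qp_expand H f ρ z xh x
    have ht2 : 0 ≤ 2⁻¹ * ((x - xh) ⬝ᵥ (Htil H ρ *ᵥ (x - xh))) := by
      have := Htil_psd hpd hρ (x - xh)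
      linarith
    have ht1 := hgradterm x hx
    rw [← hHt] at hexp ht2
    linarith
  intro y hy
  obtain ⟨hyfeas, hymin⟩ := hy
  have hyx : y = xh := by
    by_contra hne
    have hd : y - xh ≠ 0 := sub_ne_zero_of_ne hne
    have hppos := Htil_pd hpd hρ (y - xh) hd
    have hexp := qp_expand H f ρ z xh y
    have hle : qpObj H f ρ z y ≤ qpObj H f ρ z xh := hymin xh hfeasxh
    have ht1 := hgradterm y hyfeas
    rw [← hHt] at hexp hppos
    linarith
  intro i
  constructor
  · intro hyi
    by_contra hi
    have := hinact i hi
    rw [← hyx] at this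
    exact absurd hyi this.ne
  · intro hi
    rw [hyx]
    exact hact ⟨i, hi⟩
end

section
/- Let H ∈ ℝ^{n×n} with H + Hᵀ positive definite, f ∈ ℝⁿ, A ∈ ℝ^{m×n}, b ∈ ℝᵐ, and let (x*, λ*) satisfy the KKT conditions of the AVI with active set 𝒜 = {i : Aᵢx* = bᵢ}. Assume the rows {Aᵢ : i ∈ 𝒜} are linearly independent and λ*ᵢ > 0 for every i ∈ 𝒜. Let ρ > 0, H̃ := ρI + ½(H + Hᵀ), f̃(z) := f + (H − H̃)z, and for z ∈ ℝⁿ let y(z) be the unique minimizer of ½xᵀH̃x + f̃(z)ᵀx over 𝒳 = {x : Ax ≤ b} and 𝒜(z) := {i : Aᵢ y(z) = bᵢ}. Then there exists ε > 0 such that for every z with ‖z − x*‖ < ε, the linear system Hx + A_{𝒜(z)}ᵀ μ = −f, A_{𝒜(z)} x = b_{𝒜(z)} has the unique solution x = x*, μ = λ*_{𝒜}, and this solution satisfies Ax* ≤ b and μ ≥ 0; hence it coincides with the exact primal-dual solution of the AVI. -/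
open Matrix

/-- The KKT linear system `H x + A_𝒜ᵀ μ = −f`, `A_𝒜 x = b_𝒜` associated with an
active set `𝒜 = {i : Aᵢ y = bᵢ}` of a point `y`; a multiplier `μ ∈ ℝ^𝒜` is
encoded as a vector `μ ∈ ℝᵐ` vanishing outside `𝒜`, so that
`A_𝒜ᵀ μ_𝒜 = Aᵀ μ`. -/
def KKTLinSys {n m : ℕ} (H : Matrix (Fin n) (Fin n) ℝ) (f : Fin n → ℝ)
    (A : Matrix (Fin m) (Fin n) ℝ) (b : Fin m → ℝ) (y x : Fin n → ℝ)
    (μ : Fin m → ℝ) : Prop :=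
  H *ᵥ x + Aᵀ *ᵥ μ = -f ∧
  (∀ i : Fin m, A i ⬝ᵥ y ≠ b i → μ i = 0) ∧
  (∀ i : Fin m, A i ⬝ᵥ y = b i → A i ⬝ᵥ x = b i)

/- ### Auxiliary lemmas -/

lemma dot_transpose {n m : ℕ} (A : Matrix (Fin m) (Fin n) ℝ) (u : Fin n → ℝ)
    (w : Fin m → ℝ) : u ⬝ᵥ (Aᵀ *ᵥ w) = (A *ᵥ u) ⬝ᵥ w := by
  rw [Matrix.dotProduct_mulVec, Matrix.vecMul_transpose]

lemma quad_diff {n : ℕ} (M : Matrix (Fin n) (Fin n) ℝ) (hM : Mᵀ = M) (c x y : Fin n → ℝ) :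
    (2⁻¹ * (x ⬝ᵥ (M *ᵥ x)) + c ⬝ᵥ x) - (2⁻¹ * (y ⬝ᵥ (M *ᵥ y)) + c ⬝ᵥ y)
      = (M *ᵥ y + c) ⬝ᵥ (x - y) + 2⁻¹ * ((x - y) ⬝ᵥ (M *ᵥ (x - y))) := by
  have hs := dot_symm M hM x y
  have e1 : (x - y) ⬝ᵥ (M *ᵥ (x - y))
      = x ⬝ᵥ (M *ᵥ x) - x ⬝ᵥ (M *ᵥ y) - (y ⬝ᵥ (M *ᵥ x) - y ⬝ᵥ (M *ᵥ y)) := by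
    simp [Matrix.mulVec_sub, dotProduct_sub, sub_dotProduct]
    linarith
  have e2 : (M *ᵥ y + c) ⬝ᵥ (x - y)
      = x ⬝ᵥ (M *ᵥ y) - y ⬝ᵥ (M *ᵥ y) + (c ⬝ᵥ x - c ⬝ᵥ y) := by
    simp [add_dotProduct, dotProduct_sub, dotProduct_comm]
    ring
  rw [e1, e2]; linarith

/-- extension of a multiplier on the active set by zero -/
noncomputable def extv {n m : ℕ} (A : Matrix (Fin m) (Fin n) ℝ) (xs : Fin n → ℝ)
    (b : Fin m → ℝ) (μ : {i : Fin m // A i ⬝ᵥ xs = b i} → ℝ) : Fin m → ℝ :=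
  fun i => if h : A i ⬝ᵥ xs = b i then μ ⟨i, h⟩ else 0

lemma ext_sum {n m : ℕ} (A : Matrix (Fin m) (Fin n) ℝ) (xs : Fin n → ℝ) (b : Fin m → ℝ)
    (μ : {i : Fin m // A i ⬝ᵥ xs = b i} → ℝ) :
    Aᵀ *ᵥ extv A xs b μ = ∑ i : {i : Fin m // A i ⬝ᵥ xs = b i}, μ i • A i.1 := by
  set v : Fin m → ℝ := extv A xs b μ with hv
  have key : ∀ (g : Fin m → ℝ), (∑ i : Fin m, g i)
      = ∑ i : {i : Fin m // A i ⬝ᵥ xs = b i}, g i.1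
        + ∑ i : {i : Fin m // ¬ (A i ⬝ᵥ xs = b i)}, g i.1 :=
    fun g => (Fintype.sum_subtype_add_sum_subtype _ g).symm
  have lhs : ∀ (w : Fin m → ℝ) (j : Fin n), (Aᵀ *ᵥ w) j = ∑ i : Fin m, w i * A i j := by
    intro w j; simp [Matrix.mulVec_transpose, Matrix.vecMul, dotProduct]
  funext j
  rw [lhs, Finset.sum_apply, key (fun i => v i * A i j)]
  have e1 : (∑ x : {i : Fin m // A i ⬝ᵥ xs = b i}, v x.1 * A x.1 j)
      = ∑ x : {i : Fin m // A i ⬝ᵥ xs = b i}, μ x • A x.1 j := by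
    refine Finset.sum_congr rfl fun x _ => ?_
    rw [hv]; dsimp only [extv]; rw [dif_pos x.2]; rfl
  have e2 : (∑ x : {i : Fin m // ¬ (A i ⬝ᵥ xs = b i)}, v x.1 * A x.1 j) = 0 := by
    refine Finset.sum_eq_zero fun x _ => ?_
    rw [hv]; dsimp only [extv]; rw [dif_neg x.2, zero_mul]
  rw [e1, e2, add_zero]; simp

/-- the KKT linear operator of the active-set equality QP -/
noncomputable def Tmap {n m : ℕ} (H : Matrix (Fin n) (Fin n) ℝ)
    (A : Matrix (Fin m) (Fin n) ℝ) (xs : Fin n → ℝ) (b : Fin m → ℝ) (ρ : ℝ) :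
    ((Fin n → ℝ) × ({i : Fin m // A i ⬝ᵥ xs = b i} → ℝ)) →ₗ[ℝ]
      ((Fin n → ℝ) × ({i : Fin m // A i ⬝ᵥ xs = b i} → ℝ)) where
  toFun p := (Htil H ρ *ᵥ p.1 + Aᵀ *ᵥ extv A xs b p.2, fun i => A i.1 ⬝ᵥ p.1)
  map_add' p q := by
    have he : extv A xs b (p.2 + q.2) = extv A xs b p.2 + extv A xs b q.2 := by
      funext i; simp only [extv, Pi.add_apply]; split_ifs <;> simp
    refine Prod.ext ?_ ?_
    · simp only [Prod.fst_add, Prod.snd_add, he, Matrix.mulVec_add]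
      abel
    · funext i
      simp [dotProduct_add]
  map_smul' c p := by
    have he : extv A xs b (c • p.2) = c • extv A xs b p.2 := by
      funext i; simp only [extv, Pi.smul_apply, smul_eq_mul]; split_ifs <;> simp
    refine Prod.ext ?_ ?_
    · simp only [Prod.smul_fst, Prod.smul_snd, he, Matrix.mulVec_smul, RingHom.id_apply]
      rw [smul_add]
    · funext i
      simp [dotProduct_smul]

/-- Let `(x*, λ*)` satisfy the KKT conditions of the AVI, with
LICQ and strict complementarity at the active set `𝒜 = {i : Aᵢ x* = bᵢ}`, and
let `ρ > 0`. Then there is `ε > 0` such that for every `z` with Euclidean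
distance `‖z − x*‖ < ε` (expressed via `(z − x*) ⬝ᵥ (z − x*) < ε²`) and any
minimizer `y(z)` of the DR QP subproblem with parameter `z`, the linear system
`H x + A_{𝒜(z)}ᵀ μ = −f`, `A_{𝒜(z)} x = b_{𝒜(z)}` (with `𝒜(z)` the active set
of `y(z)`) has the unique solution `x = x*`, `μ = λ*` (i.e. `λ*` supported on
`𝒜`), and this solution satisfies `A x* ≤ b` and `μ ≥ 0`: it is the exact
primal-dual solution of the AVI. -/
theorem newton_step_exact (n m : ℕ) (H : Matrix (Fin n) (Fin n) ℝ)
    (f : Fin n → ℝ) (A : Matrix (Fin m) (Fin n) ℝ) (b : Fin m → ℝ)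
    (hpd : ∀ v : Fin n → ℝ, v ≠ 0 → 0 < v ⬝ᵥ ((H + Hᵀ) *ᵥ v))
    (xs : Fin n → ℝ) (ls : Fin m → ℝ)
    (hstat : H *ᵥ xs + f + Aᵀ *ᵥ ls = 0)
    (hlpos : 0 ≤ ls)
    (hfeas : A *ᵥ xs ≤ b)
    (hcomp : ∀ i : Fin m, ls i * (b i - A i ⬝ᵥ xs) = 0)
    (hlicq : LinearIndependent ℝ
      (fun i : {i : Fin m // A i ⬝ᵥ xs = b i} => A i.1))
    (hstrict : ∀ i : Fin m, A i ⬝ᵥ xs = b i → 0 < ls i)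
    (ρ : ℝ) (hρ : 0 < ρ) :
    ∃ ε : ℝ, 0 < ε ∧ ∀ z : Fin n → ℝ, (z - xs) ⬝ᵥ (z - xs) < ε ^ 2 →
      ∀ y : Fin n → ℝ,
        (A *ᵥ y ≤ b ∧ ∀ x : Fin n → ℝ, A *ᵥ x ≤ b →
            qpObj H f ρ z y ≤ qpObj H f ρ z x) →
        KKTLinSys H f A b y xs ls ∧
        (∀ (x : Fin n → ℝ) (μ : Fin m → ℝ),
          KKTLinSys H f A b y x μ → x = xs ∧ μ = ls) ∧
        A *ᵥ xs ≤ b ∧ 0 ≤ ls := by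
  classical
  -- basic positivity facts
  have hnn : ∀ v : Fin n → ℝ, 0 ≤ v ⬝ᵥ ((H + Hᵀ) *ᵥ v) := by
    intro v
    by_cases hv : v = 0
    · simp [hv]
    · exact (hpd v hv).le
  have hHtquad : ∀ v : Fin n → ℝ, v ⬝ᵥ (Htil H ρ *ᵥ v)
      = ρ * (v ⬝ᵥ v) + 2⁻¹ * (v ⬝ᵥ ((H + Hᵀ) *ᵥ v)) := by
    intro v
    simp [Htil, Matrix.add_mulVec, Matrix.smul_mulVec, dotProduct_add,
      dotProduct_smul, Matrix.one_mulVec, smul_eq_mul]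
    ring
  have hpos : ∀ v : Fin n → ℝ, ρ * (v ⬝ᵥ v) ≤ v ⬝ᵥ (Htil H ρ *ᵥ v) := by
    intro v; rw [hHtquad v]; nlinarith [hnn v]
  have hself : ∀ v : Fin n → ℝ, (0:ℝ) ≤ v ⬝ᵥ v := fun v =>
    Finset.sum_nonneg fun j _ => mul_self_nonneg _
  -- λ* vanishes off the active set
  have hls0 : ∀ i : Fin m, A i ⬝ᵥ xs ≠ b i → ls i = 0 := by
    intro i hi
    rcases mul_eq_zero.mp (hcomp i) with h | h
    · exact h
    · exact absurd (by linarith [sub_eq_zero.mp h] : A i ⬝ᵥ xs = b i) hi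
  have hstat' : H *ᵥ xs + Aᵀ *ᵥ ls = -f := by
    have : H *ᵥ xs + Aᵀ *ᵥ ls = (H *ᵥ xs + f + Aᵀ *ᵥ ls) - f := by abel
    rw [this, hstat]; simp
  -- the linear operator and its inverse
  set T := Tmap H A xs b ρ with hT
  have hTapp : ∀ p, T p = (Htil H ρ *ᵥ p.1 + Aᵀ *ᵥ extv A xs b p.2,
      fun i => A i.1 ⬝ᵥ p.1) := fun p => rfl
  have hinj : Function.Injective T := by
    rw [← LinearMap.ker_eq_bot]
    rw [LinearMap.ker_eq_bot']
    intro p hp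
    have hp1 : Htil H ρ *ᵥ p.1 + Aᵀ *ᵥ extv A xs b p.2 = 0 := congrArg Prod.fst hp
    have hp2 : ∀ i : {i : Fin m // A i ⬝ᵥ xs = b i}, A i.1 ⬝ᵥ p.1 = 0 :=
      fun i => congrFun (congrArg Prod.snd hp) i
    have hzero : (A *ᵥ p.1) ⬝ᵥ extv A xs b p.2 = 0 := by
      refine Finset.sum_eq_zero fun i _ => ?_
      by_cases h : A i ⬝ᵥ xs = b i
      · have : (A *ᵥ p.1) i = 0 := hp2 ⟨i, h⟩
        rw [this, zero_mul]
      · have : extv A xs b p.2 i = 0 := by simp [extv, h]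
        rw [this, mul_zero]
    have hdot : p.1 ⬝ᵥ (Htil H ρ *ᵥ p.1) = 0 := by
      have := congrArg (fun w => p.1 ⬝ᵥ w) hp1
      simpa [dotProduct_add, dot_transpose, hzero] using this
    have hx0 : p.1 = 0 := by
      have h1 := hpos p.1
      have h2 := hself p.1
      have : p.1 ⬝ᵥ p.1 = 0 := by nlinarith
      exact dotProduct_self_eq_zero.mp this
    have hA0 : Aᵀ *ᵥ extv A xs b p.2 = 0 := by
      have := hp1; rw [hx0] at this; simpa using this
    have hμ0 : ∀ i, p.2 i = 0 := by
      rw [ext_sum] at hA0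
      exact Fintype.linearIndependent_iff.mp hlicq p.2 hA0
    refine Prod.ext hx0 (funext hμ0)
  have hsurj : Function.Surjective T := LinearMap.injective_iff_surjective.mp hinj
  set E := LinearEquiv.ofBijective T ⟨hinj, hsurj⟩ with hE
  have hEapp : ∀ p, E p = T p := fun p => rfl
  -- the parametric solution map
  set G : (Fin n → ℝ) → ((Fin n → ℝ) × ({i : Fin m // A i ⬝ᵥ xs = b i} → ℝ)) :=
    fun z => E.symm (-(ftil H f ρ z), fun i => b i.1) with hG
  have hGcont : Continuous G := by
    have h2 : Continuous fun z : Fin n → ℝ => (H - Htil H ρ) *ᵥ z :=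
      (Matrix.mulVecLin (H - Htil H ρ)).continuous_of_finiteDimensional
    have h1 : Continuous fun z : Fin n → ℝ => -(ftil H f ρ z) := by
      unfold ftil
      exact (continuous_const.add h2).neg
    exact (E.symm.toLinearMap.continuous_of_finiteDimensional).comp
      (h1.prodMk continuous_const)
  have hTG : ∀ z, T (G z) = (-(ftil H f ρ z), fun i => b i.1) := by
    intro z
    rw [hG]
    exact E.apply_symm_apply _
  -- value at xs
  have hGxs : G xs = (xs, fun i => ls i.1) := by
    rw [hG]
    dsimp only
    rw [LinearEquiv.symm_apply_eq]
    rw [hEapp, hTapp]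
    have hext : extv A xs b (fun i => ls i.1) = ls := by
      funext i; dsimp only [extv]; split_ifs with h
      · rfl
      · exact (hls0 i h).symm
    refine Prod.ext ?_ ?_
    · dsimp only
      rw [hext]
      have hAls : Aᵀ *ᵥ ls = -f - H *ᵥ xs := by
        rw [← hstat']; abel
      unfold ftil
      rw [Matrix.sub_mulVec, hAls]
      abel
    · funext i
      exact i.2.symm
  -- the open set of good parameters
  set U : Set ((Fin n → ℝ) × ({i : Fin m // A i ⬝ᵥ xs = b i} → ℝ)) :=
    {q | (∀ i, 0 < q.2 i) ∧ ∀ i : Fin m, ¬(A i ⬝ᵥ xs = b i) → A i ⬝ᵥ q.1 < b i}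
    with hU
  have hUopen : IsOpen U := by
    have hrw : U = (⋂ i, {q : (Fin n → ℝ) × ({i : Fin m // A i ⬝ᵥ xs = b i} → ℝ) |
          0 < q.2 i}) ∩
        ⋂ i : Fin m, ⋂ (_ : ¬(A i ⬝ᵥ xs = b i)),
          {q : (Fin n → ℝ) × ({i : Fin m // A i ⬝ᵥ xs = b i} → ℝ) | A i ⬝ᵥ q.1 < b i} := by
      ext q
      simp [hU, Set.mem_iInter]
    rw [hrw]
    refine IsOpen.inter (isOpen_iInter_of_finite fun i => ?_)
      (isOpen_iInter_of_finite fun i => isOpen_iInter_of_finite fun h => ?_)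
    · exact isOpen_lt continuous_const ((continuous_apply i).comp continuous_snd)
    · have hc : Continuous fun q : (Fin n → ℝ) × ({i : Fin m // A i ⬝ᵥ xs = b i} → ℝ) =>
          A i ⬝ᵥ q.1 := by
        simp only [dotProduct]
        exact continuous_finset_sum _ fun j _ =>
          continuous_const.mul ((continuous_apply j).comp continuous_fst)
      exact isOpen_lt hc continuous_const
  have hxsU : G xs ∈ U := by
    rw [hGxs]
    constructor
    · intro i; exact hstrict i.1 i.2
    · intro i hi
      exact lt_of_le_of_ne (hfeas i) hi
  have hopen : IsOpen (G ⁻¹' U) := hUopen.preimage hGcont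
  obtain ⟨ε, hε, hball⟩ := Metric.isOpen_iff.mp hopen xs hxsU
  refine ⟨ε, hε, ?_⟩
  intro z hz
  have hzU : G z ∈ U := by
    refine hball ?_
    rw [Metric.mem_ball, dist_pi_lt_iff hε]
    intro i
    have h1 : (z i - xs i) * (z i - xs i) ≤ (z - xs) ⬝ᵥ (z - xs) := by
      have := Finset.single_le_sum (f := fun j => (z - xs) j * (z - xs) j)
        (fun j _ => mul_self_nonneg _) (Finset.mem_univ i)
      simpa [dotProduct] using this
    have h2 : (z i - xs i) * (z i - xs i) < ε ^ 2 := lt_of_le_of_lt h1 hz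
    rw [Real.dist_eq, abs_lt]
    constructor <;> nlinarith
  obtain ⟨hμpos, hinact⟩ := hzU
  have hT1 : Htil H ρ *ᵥ (G z).1 + Aᵀ *ᵥ extv A xs b (G z).2 = -(ftil H f ρ z) := by
    have := hTG z
    rw [hTapp] at this
    exact congrArg Prod.fst this
  have hT2 : ∀ i : {i : Fin m // A i ⬝ᵥ xs = b i}, A i.1 ⬝ᵥ (G z).1 = b i.1 := by
    intro i
    have := hTG z
    rw [hTapp] at this
    exact congrFun (congrArg Prod.snd this) i
  set yz := (G z).1 with hyz
  intro y hy
  obtain ⟨hyfeas, hymin⟩ := hy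
  have hyzfeas : A *ᵥ yz ≤ b := by
    intro i
    by_cases h : A i ⬝ᵥ xs = b i
    · exact le_of_eq (hT2 ⟨i, h⟩)
    · exact (hinact i h).le
  -- y = yz
  have hgrad : Htil H ρ *ᵥ yz + ftil H f ρ z = -(Aᵀ *ᵥ extv A xs b (G z).2) := by
    calc Htil H ρ *ᵥ yz + ftil H f ρ z
        = (Htil H ρ *ᵥ yz + Aᵀ *ᵥ extv A xs b (G z).2) + ftil H f ρ z
          - Aᵀ *ᵥ extv A xs b (G z).2 := by abel
      _ = -(Aᵀ *ᵥ extv A xs b (G z).2) := by rw [hT1]; abel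
  have hquad := quad_diff (Htil H ρ) (Htil_symm H ρ) (ftil H f ρ z) y yz
  have hfirst : (0:ℝ) ≤ (Htil H ρ *ᵥ yz + ftil H f ρ z) ⬝ᵥ (y - yz) := by
    rw [hgrad, neg_dotProduct, dotProduct_comm, dot_transpose]
    rw [neg_nonneg]
    refine Finset.sum_nonpos fun i _ => ?_
    by_cases h : A i ⬝ᵥ xs = b i
    · have hvi : extv A xs b (G z).2 i = (G z).2 ⟨i, h⟩ := by simp [extv, h]
      have hterm : (A *ᵥ (y - yz)) i = A i ⬝ᵥ y - b i := by
        have : (A *ᵥ (y - yz)) i = A i ⬝ᵥ y - A i ⬝ᵥ yz := by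
          rw [Matrix.mulVec_sub]; rfl
        rw [this, hT2 ⟨i, h⟩]
      rw [hvi, hterm]
      refine mul_nonpos_of_nonpos_of_nonneg ?_ (hμpos ⟨i, h⟩).le
      have h9 : A i ⬝ᵥ y ≤ b i := hyfeas i
      linarith
    · have hvi : extv A xs b (G z).2 i = 0 := by simp [extv, h]
      rw [hvi, mul_zero]
  have hyyz : y = yz := by
    have h1 : qpObj H f ρ z y ≤ qpObj H f ρ z yz := hymin yz hyzfeas
    have h2 : qpObj H f ρ z y - qpObj H f ρ z yz
        = (Htil H ρ *ᵥ yz + ftil H f ρ z) ⬝ᵥ (y - yz)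
          + 2⁻¹ * ((y - yz) ⬝ᵥ (Htil H ρ *ᵥ (y - yz))) := hquad
    have h3 := hpos (y - yz)
    have h4 := hself (y - yz)
    have h5 : (y - yz) ⬝ᵥ (y - yz) = 0 := by nlinarith
    have h6 := dotProduct_self_eq_zero.mp h5
    exact sub_eq_zero.mp h6
  have hact : ∀ i : Fin m, (A i ⬝ᵥ y = b i ↔ A i ⬝ᵥ xs = b i) := by
    intro i
    constructor
    · intro h
      by_contra hne
      rw [hyyz] at h
      exact absurd h (ne_of_lt (hinact i hne))
    · intro h
      rw [hyyz]
      exact hT2 ⟨i, h⟩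
  refine ⟨⟨hstat', ?_, ?_⟩, ?_, hfeas, hlpos⟩
  · intro i hi
    exact hls0 i fun h => hi ((hact i).mpr h)
  · intro i hi
    exact (hact i).mp hi
  · -- uniqueness
    rintro x μ' ⟨k1, k2, k3⟩
    have hd1 : H *ᵥ (x - xs) + Aᵀ *ᵥ (μ' - ls) = 0 := by
      rw [Matrix.mulVec_sub, Matrix.mulVec_sub]
      have : H *ᵥ x - H *ᵥ xs + (Aᵀ *ᵥ μ' - Aᵀ *ᵥ ls)
          = (H *ᵥ x + Aᵀ *ᵥ μ') - (H *ᵥ xs + Aᵀ *ᵥ ls) := by abel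
      rw [this, k1, hstat']
      simp
    have hdS : ∀ i : Fin m, A i ⬝ᵥ xs = b i → A i ⬝ᵥ (x - xs) = 0 := by
      intro i h
      have h1 : A i ⬝ᵥ x = b i := k3 i ((hact i).mpr h)
      rw [dotProduct_sub, h1, h, sub_self]
    have hν0 : ∀ i : Fin m, ¬(A i ⬝ᵥ xs = b i) → (μ' - ls) i = 0 := by
      intro i h
      have h1 : μ' i = 0 := k2 i fun hyb => h ((hact i).mp hyb)
      have h2 : ls i = 0 := hls0 i h
      simp [h1, h2]
    have hAdν : (A *ᵥ (x - xs)) ⬝ᵥ (μ' - ls) = 0 := by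
      refine Finset.sum_eq_zero fun i _ => ?_
      by_cases h : A i ⬝ᵥ xs = b i
      · have : (A *ᵥ (x - xs)) i = 0 := hdS i h
        rw [this, zero_mul]
      · rw [hν0 i h, mul_zero]
    have hdH : (x - xs) ⬝ᵥ (H *ᵥ (x - xs)) = 0 := by
      have hdot := congrArg (fun w => (x - xs) ⬝ᵥ w) hd1
      simp only [dotProduct_add, dot_transpose, dotProduct_zero] at hdot
      rw [hAdν, add_zero] at hdot
      exact hdot
    have hx : x = xs := by
      by_contra hne
      have hd : x - xs ≠ 0 := sub_ne_zero.mpr hne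
      have h1 := hpd (x - xs) hd
      have h2 : (x - xs) ⬝ᵥ ((H + Hᵀ) *ᵥ (x - xs))
          = 2 * ((x - xs) ⬝ᵥ (H *ᵥ (x - xs))) := by
        rw [Matrix.add_mulVec, dotProduct_add]
        have h3 : (x - xs) ⬝ᵥ (Hᵀ *ᵥ (x - xs)) = (x - xs) ⬝ᵥ (H *ᵥ (x - xs)) := by
          rw [dot_transpose, dotProduct_comm]
        rw [h3]; ring
      rw [h2, hdH] at h1
      simp at h1
    have hAν : Aᵀ *ᵥ (μ' - ls) = 0 := by
      have := hd1
      rw [hx, sub_self, Matrix.mulVec_zero, zero_add] at this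
      exact this
    have hext : extv A xs b (fun i => (μ' - ls) i.1) = μ' - ls := by
      funext i
      dsimp only [extv]
      split_ifs with h
      · rfl
      · exact (hν0 i h).symm
    rw [← hext, ext_sum] at hAν
    have hz0 := Fintype.linearIndependent_iff.mp hlicq _ hAν
    have hμ : μ' = ls := by
      funext i
      by_cases h : A i ⬝ᵥ xs = b i
      · have := hz0 ⟨i, h⟩
        have : (μ' - ls) i = 0 := this
        simpa [sub_eq_zero] using this
      · have := hν0 i h
        simpa [sub_eq_zero] using this
    exact ⟨hx, hμ⟩
end
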